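/- arXiv:1910.04000 — 4 statements merged into one kernel-verified Lean document; each statement's English description precedes it below -/
import Mathlib

section
/- Energy conservation of the implicit midpoint (Crank–Nicolson) Maxwell update: if M₁, M₂ are symmetric matrices and e^{m+1}, b^{m+1} satisfy M₁ e^{m+1} - (Δt/2) Cᵀ M₂ b^{m+1} = M₁ e^m + (Δt/2) Cᵀ M₂ b^m and M₂ b^{m+1} + (Δt/2) M₂ C e^{m+1} = M₂ b^m - (Δt/2) M₂ C e^m, then (e^{m+1})ᵀ M₁ e^{m+1} + (b^{m+1})ᵀ M₂ b^{m+1} = (e^m)ᵀ M₁ e^m + (b^m)ᵀ M₂ b^m. -/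
open Matrix

lemma dot_mulVec_symm {k : ℕ} (M : Matrix (Fin k) (Fin k) ℝ) (hM : M.IsSymm)
    (v w : Fin k → ℝ) : dotProduct v (M.mulVec w) = dotProduct w (M.mulVec v) := by
  rw [Matrix.dotProduct_mulVec, ← Matrix.mulVec_transpose, hM.eq, dotProduct_comm]

lemma dot_cross {n m : ℕ} (M₂ : Matrix (Fin m) (Fin m) ℝ) (hM₂ : M₂.IsSymm)
    (C : Matrix (Fin m) (Fin n) ℝ) (v : Fin n → ℝ) (w : Fin m → ℝ) :
    dotProduct v ((Cᵀ * M₂).mulVec w) = dotProduct w ((M₂ * C).mulVec v) := by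
  rw [Matrix.dotProduct_mulVec, ← Matrix.mulVec_transpose, Matrix.transpose_mul,
    Matrix.transpose_transpose, hM₂.eq, dotProduct_comm]

theorem crank_nicolson_maxwell_energy {n m : ℕ}
    (M₁ : Matrix (Fin n) (Fin n) ℝ) (M₂ : Matrix (Fin m) (Fin m) ℝ)
    (hM₁ : M₁.IsSymm) (hM₂ : M₂.IsSymm)
    (C : Matrix (Fin m) (Fin n) ℝ) (Δt : ℝ)
    (e e' : Fin n → ℝ) (b b' : Fin m → ℝ)
    (he : M₁.mulVec e' - (Δt / 2) • (Cᵀ * M₂).mulVec b'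
        = M₁.mulVec e + (Δt / 2) • (Cᵀ * M₂).mulVec b)
    (hbb : M₂.mulVec b' + (Δt / 2) • (M₂ * C).mulVec e'
        = M₂.mulVec b - (Δt / 2) • (M₂ * C).mulVec e) :
    dotProduct e' (M₁.mulVec e') + dotProduct b' (M₂.mulVec b')
      = dotProduct e (M₁.mulVec e) + dotProduct b (M₂.mulVec b) := by
  have h1 := congrArg (dotProduct (e' + e)) he
  have h2 := congrArg (dotProduct (b' + b)) hbb
  simp only [dotProduct_sub, dotProduct_add, dotProduct_smul,
    add_dotProduct, smul_eq_mul] at h1 h2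
  have s1 := dot_mulVec_symm M₁ hM₁ e e'
  have s2 := dot_mulVec_symm M₂ hM₂ b b'
  have c1 := dot_cross M₂ hM₂ C e' b'
  have c2 := dot_cross M₂ hM₂ C e' b
  have c3 := dot_cross M₂ hM₂ C e b'
  have c4 := dot_cross M₂ hM₂ C e b
  rw [c1, c2, c3, c4, s1] at h1
  rw [s2] at h2
  ring_nf at h1 h2 ⊢
  linarith
end

section
/- Divergence preservation in the field update: let G and C be matrices with C * G = 0 (discrete curl of a gradient vanishes). If e^{m+1} satisfies (M₁ + (Δt²/4) Cᵀ M₂ C) e^{m+1} = (M₁ - (Δt²/4) Cᵀ M₂ C) e^m + Δt Cᵀ M₂ b^m, then Gᵀ M₁ e^{m+1} = Gᵀ M₁ e^m. -/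
open Matrix

theorem Matrix.transpose_mulVec_mulVec_transpose_mul_eq_zero {R ι κ μ ν : Type*}
    [CommSemiring R] [Fintype ι] [Fintype κ] [Fintype μ]
    {C : Matrix κ ι R} {G : Matrix ι ν R} (hCG : C * G = 0) (A : Matrix κ μ R) (v : μ → R) :
    Gᵀ *ᵥ ((Cᵀ * A) *ᵥ v) = 0 := by
  rw [mulVec_mulVec, ← Matrix.mul_assoc, ← transpose_mul, hCG, transpose_zero,
    Matrix.zero_mul, zero_mulVec]

theorem field_update_preserves_divergence {n m k : ℕ}
    (M₁ : Matrix (Fin n) (Fin n) ℝ) (M₂ : Matrix (Fin m) (Fin m) ℝ)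
    (C : Matrix (Fin m) (Fin n) ℝ) (G : Matrix (Fin n) (Fin k) ℝ)
    (hCG : C * G = 0) (Δt : ℝ)
    (e e' : Fin n → ℝ) (b : Fin m → ℝ)
    (hupd : (M₁ + (Δt ^ 2 / 4) • (Cᵀ * M₂ * C)).mulVec e'
        = (M₁ - (Δt ^ 2 / 4) • (Cᵀ * M₂ * C)).mulVec e + Δt • (Cᵀ * M₂).mulVec b) :
    Gᵀ.mulVec (M₁.mulVec e') = Gᵀ.mulVec (M₁.mulVec e) := by
  have h := congrArg Gᵀ.mulVec hupd
  rw [Matrix.mul_assoc Cᵀ M₂ C] at h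
  simpa only [add_mulVec, sub_mulVec, smul_mulVec, mulVec_add, mulVec_sub, mulVec_smul,
    transpose_mulVec_mulVec_transpose_mul_eq_zero hCG, smul_zero, add_zero, sub_zero] using h
end

section
/- Energy conservation of the particle–field discrete gradient step: suppose symmetric matrices M_p (particle mass), M₁ (field mass), M_q, and a matrix A (the time-averaged evaluation matrix ∫Λ¹(X(τ))dτ) satisfy the update equations V^{m+1} - V^m = (Δt) M_p⁻¹ M_q A ((E^m + E^{m+1})/2) and E^{m+1} - E^m = -(Δt) M₁⁻¹ Aᵀ M_q ((V^m + V^{m+1})/2), with M_p, M₁ invertible and M_q symmetric. Then (V^{m+1})ᵀ M_p V^{m+1} + (E^{m+1})ᵀ M₁ E^{m+1} = (V^m)ᵀ M_p V^m + (E^m)ᵀ M₁ E^m. -/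
open Matrix

lemma symm_dot {k : ℕ} (M : Matrix (Fin k) (Fin k) ℝ) (hM : M.IsSymm)
    (x y : Fin k → ℝ) : x ⬝ᵥ M.mulVec y = y ⬝ᵥ M.mulVec x := by
  rw [dotProduct_mulVec, ← mulVec_transpose, hM.eq, dotProduct_comm]

theorem particle_field_discrete_gradient_energy {N n : ℕ}
    (Mp Mq : Matrix (Fin N) (Fin N) ℝ) (M₁ : Matrix (Fin n) (Fin n) ℝ)
    (hMp : Mp.IsSymm) (hM₁ : M₁.IsSymm) (hMq : Mq.IsSymm)
    (hMpinv : IsUnit Mp.det) (hM₁inv : IsUnit M₁.det)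
    (A : Matrix (Fin N) (Fin n) ℝ) (Δt : ℝ)
    (V V' : Fin N → ℝ) (E E' : Fin n → ℝ)
    (hV : V' - V = Δt • (Mp⁻¹ * Mq * A).mulVec ((2 : ℝ)⁻¹ • (E + E')))
    (hE : E' - E = -(Δt • (M₁⁻¹ * Aᵀ * Mq).mulVec ((2 : ℝ)⁻¹ • (V + V')))) :
    dotProduct V' (Mp.mulVec V') + dotProduct E' (M₁.mulVec E')
      = dotProduct V (Mp.mulVec V) + dotProduct E (M₁.mulVec E) := by
  set a : Fin n → ℝ := (2 : ℝ)⁻¹ • (E + E') with ha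
  set b : Fin N → ℝ := (2 : ℝ)⁻¹ • (V + V') with hb
  have hMpV : Mp.mulVec (V' - V) = Δt • (Mq * A).mulVec a := by
    rw [hV, mulVec_smul, ← mulVec_mulVec, ← mulVec_mulVec, mulVec_mulVec,
      Matrix.mul_nonsing_inv Mp hMpinv, Matrix.one_mulVec, mulVec_mulVec]
  have hM₁E : M₁.mulVec (E' - E) = -(Δt • (Aᵀ * Mq).mulVec b) := by
    rw [hE, mulVec_neg, mulVec_smul, ← mulVec_mulVec, ← mulVec_mulVec, mulVec_mulVec,
      Matrix.mul_nonsing_inv M₁ hM₁inv, Matrix.one_mulVec, mulVec_mulVec]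
  have hdV : V' ⬝ᵥ Mp.mulVec V' - V ⬝ᵥ Mp.mulVec V = (V + V') ⬝ᵥ Mp.mulVec (V' - V) := by
    rw [mulVec_sub, add_dotProduct, dotProduct_sub, dotProduct_sub,
      symm_dot Mp hMp V V']
    ring
  have hdE : E' ⬝ᵥ M₁.mulVec E' - E ⬝ᵥ M₁.mulVec E = (E + E') ⬝ᵥ M₁.mulVec (E' - E) := by
    rw [mulVec_sub, add_dotProduct, dotProduct_sub, dotProduct_sub,
      symm_dot M₁ hM₁ E E']
    ring
  have hswap : (V + V') ⬝ᵥ (Mq * A).mulVec a = a ⬝ᵥ (Aᵀ * Mq).mulVec (V + V') := by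
    rw [dotProduct_mulVec, ← mulVec_transpose, Matrix.transpose_mul, hMq.eq,
      dotProduct_comm]
  have hVV : (V + V') = (2 : ℝ) • b := by
    rw [hb, smul_smul]; norm_num
  have hEE : (E + E') = (2 : ℝ) • a := by
    rw [ha, smul_smul]; norm_num
  have h1 : (V + V') ⬝ᵥ Mp.mulVec (V' - V) = Δt * (a ⬝ᵥ (Aᵀ * Mq).mulVec ((2:ℝ) • b)) := by
    rw [hMpV, dotProduct_smul, hswap, smul_eq_mul, ← hVV]
  have h2 : (E + E') ⬝ᵥ M₁.mulVec (E' - E) = -(Δt * ((2:ℝ) • a ⬝ᵥ (Aᵀ * Mq).mulVec b)) := by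
    rw [hM₁E, dotProduct_neg, dotProduct_smul, smul_eq_mul, hEE]
  have h3 : a ⬝ᵥ (Aᵀ * Mq).mulVec ((2:ℝ) • b) = (2:ℝ) • a ⬝ᵥ (Aᵀ * Mq).mulVec b := by
    rw [mulVec_smul, smul_dotProduct, dotProduct_smul, ha]
    simp [smul_dotProduct, smul_smul]
  have := hdV
  have := hdE
  rw [h1, h3] at hdV
  rw [h2] at hdE
  linarith
end

section
/- Telescoping energy conservation with substepping: suppose for each substep ν = 0,…,N-1 the velocity update satisfies (V^{ν+1})ᵀ M_p V^{ν+1} - (V^ν)ᵀ M_p V^ν = (V^{ν+1} + V^ν)ᵀ M_q A_ν ((E^m + E^{m+1})/2), where the field update gives Eᵐ⁺¹ - Eᵐ = -M₁⁻¹ (∑_ν A_νᵀ M_q (V^ν + V^{ν+1})/2). Then, with M₁ symmetric invertible, (V^N)ᵀ M_p V^N + (E^{m+1})ᵀ M₁ E^{m+1} = (V^0)ᵀ M_p V^0 + (E^m)ᵀ M₁ E^m. -/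
open Matrix

lemma fin_telescope_aux {N : ℕ} (g : Fin (N + 1) → ℝ) :
    ∑ ν : Fin N, (g ν.succ - g ν.castSucc) = g (Fin.last N) - g 0 := by
  induction N with
  | zero => simp
  | succ n ih =>
    rw [Fin.sum_univ_castSucc]
    have := ih (fun i => g i.castSucc)
    simp only [Fin.succ_castSucc] at this ⊢
    rw [show ∑ ν : Fin n, (g (Fin.castSucc ν.succ) - g ν.castSucc.castSucc)
        = g (Fin.last n).castSucc - g (Fin.castSucc 0) from this]
    simp [Fin.succ_last]

lemma dotProduct_finsum {m : Type*} [Fintype m] {ι : Type*} (s : Finset ι)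
    (a : m → ℝ) (f : ι → m → ℝ) :
    dotProduct a (∑ i ∈ s, f i) = ∑ i ∈ s, dotProduct a (f i) := by
  simp only [dotProduct, Finset.sum_apply, Finset.mul_sum]
  exact Finset.sum_comm

theorem substepping_energy_conservation {K n N : ℕ}
    (Mp Mq : Matrix (Fin K) (Fin K) ℝ) (hMp : Mp.IsSymm) (hMq : Mq.IsSymm)
    (M₁ : Matrix (Fin n) (Fin n) ℝ) (hM₁ : M₁.IsSymm) (hM₁inv : IsUnit M₁.det)
    (A : Fin N → Matrix (Fin K) (Fin n) ℝ)
    (V : Fin (N + 1) → (Fin K → ℝ)) (Em Em1 : Fin n → ℝ)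
    (hV : ∀ ν : Fin N,
      dotProduct (V ν.succ) (Mp.mulVec (V ν.succ))
        - dotProduct (V ν.castSucc) (Mp.mulVec (V ν.castSucc))
      = dotProduct (V ν.succ + V ν.castSucc)
          ((Mq * A ν).mulVec ((2 : ℝ)⁻¹ • (Em + Em1))))
    (hE : Em1 - Em
      = -(M₁⁻¹.mulVec (∑ ν : Fin N,
          (A ν)ᵀ.mulVec (Mq.mulVec ((2 : ℝ)⁻¹ • (V ν.castSucc + V ν.succ)))))) :
    dotProduct (V (Fin.last N)) (Mp.mulVec (V (Fin.last N)))
      + dotProduct Em1 (M₁.mulVec Em1)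
    = dotProduct (V 0) (Mp.mulVec (V 0))
      + dotProduct Em (M₁.mulVec Em) := by
  -- telescoping kinetic energy
  have htel : dotProduct (V (Fin.last N)) (Mp.mulVec (V (Fin.last N)))
      - dotProduct (V 0) (Mp.mulVec (V 0))
      = ∑ ν : Fin N, dotProduct (V ν.succ + V ν.castSucc)
          ((Mq * A ν).mulVec ((2 : ℝ)⁻¹ • (Em + Em1))) := by
    rw [← fin_telescope_aux (fun i => dotProduct (V i) (Mp.mulVec (V i)))]
    exact Finset.sum_congr rfl fun ν _ => hV ν
  -- field update
  have hME : M₁.mulVec (Em1 - Em)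
      = -(∑ ν : Fin N,
          (A ν)ᵀ.mulVec (Mq.mulVec ((2 : ℝ)⁻¹ • (V ν.castSucc + V ν.succ)))) := by
    rw [hE, Matrix.mulVec_neg, Matrix.mulVec_mulVec,
      Matrix.mul_nonsing_inv _ hM₁inv, Matrix.one_mulVec]
  have hsymM₁ : ∀ a b : Fin n → ℝ,
      dotProduct a (M₁.mulVec b) = dotProduct b (M₁.mulVec a) := by
    intro a b
    rw [dotProduct_mulVec, ← Matrix.vecMul_transpose, hM₁.eq,
      dotProduct_comm]
  have hfield : dotProduct Em1 (M₁.mulVec Em1)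
      - dotProduct Em (M₁.mulVec Em)
      = dotProduct (Em1 + Em) (M₁.mulVec (Em1 - Em)) := by
    rw [Matrix.mulVec_sub, add_dotProduct, dotProduct_sub,
      dotProduct_sub, hsymM₁ Em Em1]
    ring
  -- per-term equality
  have hterm : ∀ ν : Fin N,
      dotProduct (V ν.succ + V ν.castSucc)
          ((Mq * A ν).mulVec ((2 : ℝ)⁻¹ • (Em + Em1)))
      = dotProduct (Em1 + Em)
          ((A ν)ᵀ.mulVec (Mq.mulVec ((2 : ℝ)⁻¹ • (V ν.castSucc + V ν.succ)))) := by
    intro ν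
    rw [Matrix.mulVec_smul, dotProduct_smul,
      Matrix.mulVec_smul, Matrix.mulVec_smul, dotProduct_smul]
    congr 1
    rw [Matrix.mulVec_mulVec, dotProduct_mulVec, ← Matrix.vecMul_transpose,
      Matrix.transpose_mul, hMq.eq, dotProduct_comm, add_comm Em1 Em,
      add_comm (V ν.castSucc) (V ν.succ), Matrix.transpose_transpose]
  have hsum : dotProduct (Em1 + Em) (M₁.mulVec (Em1 - Em))
      = -∑ ν : Fin N, dotProduct (V ν.succ + V ν.castSucc)
          ((Mq * A ν).mulVec ((2 : ℝ)⁻¹ • (Em + Em1))) := by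
    rw [hME, dotProduct_neg, dotProduct_finsum]
    congr 1
    exact Finset.sum_congr rfl fun ν _ => (hterm ν).symm
  have := hfield.trans hsum
  linarith [htel, this]
end
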